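/- arXiv:2101.08966 — 2 statements merged into one kernel-verified Lean document; each statement's English description precedes it below -/
import Mathlib

section
/- Fix n ≥ 1 and 1 ≤ i ≤ n. Define the field of 2-forms Q on ℝ^{n,1} by Q(x) = 𝒟(x) ∧ 𝓛₀ᵢ(x) + ½(1 + η(x,x)) dx⁰∧dxⁱ. Then Q is a conformal Killing–Yano 2-form with associated 1-form ξ(x) = 𝓛₀ᵢ(x); that is, for every x ∈ ℝ^{n+1} and all vectors X, Y, Z ∈ ℝ^{n+1}: (D_X Q)(x)(Y,Z) + (D_Y Q)(x)(X,Z) = 2η(X,Y)·𝓛₀ᵢ(x)(Z) − η(X,Z)·𝓛₀ᵢ(x)(Y) − η(Y,Z)·𝓛₀ᵢ(x)(X). -/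
open scoped BigOperators

noncomputable section

/-- The Lorentzian bilinear form η(X,Y) = −X⁰Y⁰ + Σ_{j=1}^n XʲYʲ on ℝ^{n,1}. -/
def eta (n : ℕ) (X Y : Fin (n + 1) → ℝ) : ℝ :=
  -(X 0 * Y 0) + ∑ j ∈ Finset.univ.erase (0 : Fin (n + 1)), X j * Y j

/-- The 1-form 𝓛₀ᵢ(x) : Z ↦ −x⁰Zⁱ + xⁱZ⁰. -/
def rotForm (n : ℕ) (i : Fin (n + 1)) (x Z : Fin (n + 1) → ℝ) : ℝ :=
  -(x 0 * Z i) + x i * Z 0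

/-- Q(x) = 𝒟(x) ∧ 𝓛₀ᵢ(x) + ½(1 + η(x,x)) dx⁰∧dxⁱ, where 𝒟(x)(Z) = η(x,Z)
and (α∧β)(Y,Z) = α(Y)β(Z) − α(Z)β(Y). -/
def Qform (n : ℕ) (i : Fin (n + 1)) (x Y Z : Fin (n + 1) → ℝ) : ℝ :=
  (eta n x Y * rotForm n i x Z - eta n x Z * rotForm n i x Y)
    + (1 / 2) * (1 + eta n x x) * (Y 0 * Z i - Y i * Z 0)

/-- The linear functional `X ↦ eta n X Y` as a continuous linear map. -/
def etaL (n : ℕ) (Y : Fin (n + 1) → ℝ) : (Fin (n + 1) → ℝ) →L[ℝ] ℝ :=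
  (-(Y 0)) • ContinuousLinearMap.proj 0
    + ∑ j ∈ Finset.univ.erase (0 : Fin (n + 1)), Y j • ContinuousLinearMap.proj j

@[simp] lemma etaL_apply (n : ℕ) (Y X : Fin (n + 1) → ℝ) :
    etaL n Y X = eta n X Y := by
  simp [etaL, eta, mul_comm]

/-- The linear functional `X ↦ rotForm n i X Z` as a continuous linear map. -/
def rotL (n : ℕ) (i : Fin (n + 1)) (Z : Fin (n + 1) → ℝ) : (Fin (n + 1) → ℝ) →L[ℝ] ℝ :=
  (-(Z i)) • ContinuousLinearMap.proj 0 + Z 0 • ContinuousLinearMap.proj i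

@[simp] lemma rotL_apply (n : ℕ) (i : Fin (n + 1)) (Z X : Fin (n + 1) → ℝ) :
    rotL n i Z X = rotForm n i X Z := by
  simp [rotL, rotForm, mul_comm]

lemma eta_symm (n : ℕ) (A B : Fin (n + 1) → ℝ) : eta n A B = eta n B A := by
  simp [eta, mul_comm]

lemma hasF_eta (n : ℕ) (Y x : Fin (n + 1) → ℝ) :
    HasFDerivAt (fun p => eta n p Y) (etaL n Y) x := by
  have h : (fun p : Fin (n + 1) → ℝ => eta n p Y) = fun p => etaL n Y p := by
    funext p; simp
  rw [h]
  exact (etaL n Y).hasFDerivAt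

lemma hasF_rot (n : ℕ) (i : Fin (n + 1)) (Z x : Fin (n + 1) → ℝ) :
    HasFDerivAt (fun p => rotForm n i p Z) (rotL n i Z) x := by
  have h : (fun p : Fin (n + 1) → ℝ => rotForm n i p Z) = fun p => rotL n i Z p := by
    funext p; simp
  rw [h]
  exact (rotL n i Z).hasFDerivAt

lemma hasF_eta_self (n : ℕ) (x : Fin (n + 1) → ℝ) :
    HasFDerivAt (fun p => eta n p p) ((2 : ℝ) • etaL n x) x := by
  have h0 : HasFDerivAt (fun p : Fin (n + 1) → ℝ => p 0 * p 0)
      (x 0 • (ContinuousLinearMap.proj 0 : (Fin (n + 1) → ℝ) →L[ℝ] ℝ)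
        + x 0 • ContinuousLinearMap.proj 0) x :=
    ((ContinuousLinearMap.proj 0 : (Fin (n + 1) → ℝ) →L[ℝ] ℝ).hasFDerivAt).mul
      ((ContinuousLinearMap.proj 0 : (Fin (n + 1) → ℝ) →L[ℝ] ℝ).hasFDerivAt)
  have hj : ∀ j ∈ Finset.univ.erase (0 : Fin (n + 1)),
      HasFDerivAt (fun p : Fin (n + 1) → ℝ => p j * p j)
        (x j • (ContinuousLinearMap.proj j : (Fin (n + 1) → ℝ) →L[ℝ] ℝ)
          + x j • ContinuousLinearMap.proj j) x := fun j _ =>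
    ((ContinuousLinearMap.proj j : (Fin (n + 1) → ℝ) →L[ℝ] ℝ).hasFDerivAt).mul
      ((ContinuousLinearMap.proj j : (Fin (n + 1) → ℝ) →L[ℝ] ℝ).hasFDerivAt)
  have hsum := HasFDerivAt.fun_sum hj
  have h := (h0.fun_neg).fun_add hsum
  have hfun : (fun p : Fin (n + 1) → ℝ =>
      -(p 0 * p 0) + ∑ j ∈ Finset.univ.erase (0 : Fin (n + 1)), p j * p j)
      = fun p => eta n p p := by
    funext p; simp [eta]
  rw [hfun] at h
  refine h.congr_fderiv ?_
  ext v
  simp [etaL, Finset.sum_add_distrib, two_mul, mul_comm]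

/-- Q(x) = 𝒟(x) ∧ 𝓛₀ᵢ(x) + ½(1 + η(x,x)) dx⁰∧dxⁱ is a conformal Killing–Yano
2-form on ℝ^{n,1} with associated 1-form ξ(x) = 𝓛₀ᵢ(x). -/
theorem cky_minkowski (n : ℕ) (hn : 1 ≤ n) (i : Fin (n + 1)) (hi : 1 ≤ (i : ℕ))
    (x X Y Z : Fin (n + 1) → ℝ) :
    fderiv ℝ (fun p => Qform n i p Y Z) x X
      + fderiv ℝ (fun p => Qform n i p X Z) x Y
    = 2 * eta n X Y * rotForm n i x Z
      - eta n X Z * rotForm n i x Y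
      - eta n Y Z * rotForm n i x X := by
  have key : ∀ A B : Fin (n + 1) → ℝ,
      HasFDerivAt (fun p => Qform n i p A B)
        ((eta n x A • rotL n i B + rotForm n i x B • etaL n A
            - (eta n x B • rotL n i A + rotForm n i x A • etaL n B))
          + ((A 0 * B i - A i * B 0) • ((1 / 2 : ℝ) • ((2 : ℝ) • etaL n x)))) x := by
    intro A B
    have h1 := (hasF_eta n A x).fun_mul (hasF_rot n i B x)
    have h2 := (hasF_eta n B x).fun_mul (hasF_rot n i A x)
    have h3 := (((hasF_eta_self n x).const_add (1 : ℝ)).const_mul (1 / 2 : ℝ)).mul_const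
      (A 0 * B i - A i * B 0)
    have h := (h1.fun_sub h2).fun_add h3
    have hfun : (fun p : Fin (n + 1) → ℝ =>
          (eta n p A * rotForm n i p B - eta n p B * rotForm n i p A)
            + (1 / 2) * (1 + eta n p p) * (A 0 * B i - A i * B 0))
        = fun p => Qform n i p A B := by
      funext p; rfl
    rw [hfun] at h
    convert h using 2
  rw [(key Y Z).fderiv, (key X Z).fderiv]
  simp only [ContinuousLinearMap.add_apply, ContinuousLinearMap.sub_apply,
    ContinuousLinearMap.smul_apply, etaL_apply, rotL_apply, smul_eq_mul]
  rw [eta_symm n Y X, eta_symm n X x, eta_symm n Y x]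
  simp only [rotForm]
  ring
end
end

section
/- Fix i ∈ {1,2,3} and let Q be the restriction to the anti-de Sitter quadric adS = {y ∈ ℝ⁵ : η₃₂(y,y) = −1} of the constant 2-form α(Y,Z) = YⁱZ⁴ − Y⁴Zⁱ (i.e. Q = dyⁱ ∧ dy⁴ on adS). Then Q is a conformal Killing–Yano 2-form on adS with associated 1-form ξ_y(Z) = yⁱZ⁴ − y⁴Zⁱ (i.e. ξ = yⁱdy⁴ − y⁴dyⁱ, so that div Q = 3ξ): for all smooth vector fields X, Y, Z on ℝ⁵ that are tangent to adS along adS, at every point y ∈ adS one has (∇_X Q)(Y,Z) + (∇_Y Q)(X,Z) = 2η₃₂(X,Y)ξ_y(Z) − η₃₂(X,Z)ξ_y(Y) − η₃₂(Y,Z)ξ_y(X). -/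
noncomputable section

/-- The bilinear form η₃₂ of signature (3,2) on ℝ⁵. -/
def eta32 (X Y : Fin 5 → ℝ) : ℝ :=
  -(X 0 * Y 0) + X 1 * Y 1 + X 2 * Y 2 + X 3 * Y 3 - X 4 * Y 4

/-- Tangential projection onto the tangent space of the anti-de Sitter quadric
adS = {y : η₃₂(y,y) = −1}: P_y(v) = v + η₃₂(y,v)y. -/
def proj (y v : Fin 5 → ℝ) : Fin 5 → ℝ := v + eta32 y v • y

/-- Induced Levi-Civita covariant derivative ∇_X Y = P_y(D_X Y) on adS. -/
def covD (X Y : (Fin 5 → ℝ) → Fin 5 → ℝ) (y : Fin 5 → ℝ) : Fin 5 → ℝ :=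
  proj y (fderiv ℝ Y y (X y))

/-- The constant 2-form α(Y,Z) = YⁱZ⁴ − Y⁴Zⁱ, i.e. dyⁱ ∧ dy⁴. -/
def qf (i : Fin 5) (a b : Fin 5 → ℝ) : ℝ := a i * b 4 - a 4 * b i

/-- (∇_X Q)(Y,Z) = D_X(Q(Y,Z)) − Q(∇_X Y, Z) − Q(Y, ∇_X Z) for Q = dyⁱ∧dy⁴. -/
def covQ (i : Fin 5) (X Y Z : (Fin 5 → ℝ) → Fin 5 → ℝ) (y : Fin 5 → ℝ) : ℝ :=
  fderiv ℝ (fun p => qf i (Y p) (Z p)) y (X y)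
    - qf i (covD X Y y) (Z y) - qf i (Y y) (covD X Z y)

/-- The 1-form ξ_y(Z) = yⁱZ⁴ − y⁴Zⁱ. -/
def xiForm (i : Fin 5) (y Z : Fin 5 → ℝ) : ℝ := y i * Z 4 - y 4 * Z i

lemma hasF (F : (Fin 5 → ℝ) → Fin 5 → ℝ) (hF : ContDiff ℝ (⊤ : ℕ∞) F) (k : Fin 5) (y : Fin 5 → ℝ) :
    HasFDerivAt (fun p => F p k)
      ((ContinuousLinearMap.proj k : (Fin 5 → ℝ) →L[ℝ] ℝ).comp (fderiv ℝ F y)) y :=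
  ((ContinuousLinearMap.proj k : (Fin 5 → ℝ) →L[ℝ] ℝ).hasFDerivAt (x := F y)).comp y
    (hF.differentiable (by simp) y).hasFDerivAt

lemma fderiv_qf (i : Fin 5) (F G : (Fin 5 → ℝ) → Fin 5 → ℝ)
    (hF : ContDiff ℝ (⊤ : ℕ∞) F) (hG : ContDiff ℝ (⊤ : ℕ∞) G) (y v : Fin 5 → ℝ) :
    fderiv ℝ (fun p => qf i (F p) (G p)) y v
      = qf i (fderiv ℝ F y v) (G y) + qf i (F y) (fderiv ℝ G y v) := by
  have hq : HasFDerivAt (fun p => F p i * G p 4 - F p 4 * G p i) _ y :=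
    ((hasF F hF i y).mul (hasF G hG 4 y)).sub ((hasF F hF 4 y).mul (hasF G hG i y))
  rw [show (fun p => qf i (F p) (G p)) = (fun p => F p i * G p 4 - F p 4 * G p i) from rfl,
    hq.fderiv]
  simp [qf]
  ring

lemma fderiv_eta (F G : (Fin 5 → ℝ) → Fin 5 → ℝ)
    (hF : ContDiff ℝ (⊤ : ℕ∞) F) (hG : ContDiff ℝ (⊤ : ℕ∞) G) (y v : Fin 5 → ℝ) :
    fderiv ℝ (fun p => eta32 (F p) (G p)) y v
      = eta32 (fderiv ℝ F y v) (G y) + eta32 (F y) (fderiv ℝ G y v) := by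
  have hq : HasFDerivAt (fun p => -(F p 0 * G p 0) + F p 1 * G p 1 + F p 2 * G p 2
      + F p 3 * G p 3 - F p 4 * G p 4) _ y :=
    (((((hasF F hF 0 y).mul (hasF G hG 0 y)).neg.add
      ((hasF F hF 1 y).mul (hasF G hG 1 y))).add
      ((hasF F hF 2 y).mul (hasF G hG 2 y))).add
      ((hasF F hF 3 y).mul (hasF G hG 3 y))).sub
      ((hasF F hF 4 y).mul (hasF G hG 4 y))
  rw [show (fun p => eta32 (F p) (G p)) = (fun p => -(F p 0 * G p 0) + F p 1 * G p 1
      + F p 2 * G p 2 + F p 3 * G p 3 - F p 4 * G p 4) from rfl, hq.fderiv]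
  simp [eta32]
  ring

lemma key (Yf : (Fin 5 → ℝ) → Fin 5 → ℝ) (hY : ContDiff ℝ (⊤ : ℕ∞) Yf)
    (hYt : ∀ y, eta32 y y = -1 → eta32 y (Yf y) = 0)
    (y v : Fin 5 → ℝ) (hy : eta32 y y = -1) (hv : eta32 y v = 0) :
    eta32 y (fderiv ℝ Yf y v) = - eta32 v (Yf y) := by
  set q : ℝ := eta32 v v with hq
  set c : ℝ → (Fin 5 → ℝ) := fun t => Real.sqrt (1 + t^2 * q) • y + t • v with hc
  set g : (Fin 5 → ℝ) → ℝ := fun p => eta32 p (Yf p) with hg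
  -- c 0 = y
  have hc0 : c 0 = y := by
    simp [hc, Real.sqrt_one]
  -- derivative of c at 0 is v
  have hs : HasDerivAt (fun t : ℝ => Real.sqrt (1 + t^2 * q)) 0 0 := by
    have h1 : HasDerivAt (fun t : ℝ => 1 + t^2 * q) 0 0 := by
      have := ((hasDerivAt_pow 2 (0:ℝ)).mul_const q).const_add 1
      simpa using this
    have := h1.sqrt (by norm_num)
    simpa using this
  have hcd : HasDerivAt c v 0 := by
    have h1 := hs.smul_const y
    have h2 := (hasDerivAt_id (0:ℝ)).smul_const v
    have := h1.add h2
    simp at this; exact this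
  -- g is differentiable
  have hgd : ContDiff ℝ (⊤ : ℕ∞) g := by
    rw [hg]
    unfold eta32
    fun_prop
  have hgfd : HasFDerivAt g (fderiv ℝ g y) y := (hgd.differentiable (by simp) y).hasFDerivAt
  have hgfd' : HasFDerivAt g (fderiv ℝ g y) (c 0) := by rw [hc0]; exact hgfd
  have hcomp : HasDerivAt (fun t => g (c t)) (fderiv ℝ g y v) 0 :=
    hgfd'.comp_hasDerivAt 0 hcd
  -- g ∘ c is eventually 0
  have hposev : ∀ᶠ t in nhds (0:ℝ), 0 < 1 + t^2 * q := by
    have hcont : ContinuousAt (fun t : ℝ => 1 + t^2 * q) 0 := by fun_prop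
    have : (0:ℝ) < 1 + 0^2 * q := by norm_num
    exact hcont.eventually_mem (Ioi_mem_nhds (by simpa using this))
  have hev : (fun t => g (c t)) =ᶠ[nhds (0:ℝ)] (fun _ => (0:ℝ)) := by
    filter_upwards [hposev] with t ht
    have ha : Real.sqrt (1 + t^2 * q) ^ 2 = 1 + t^2 * q := Real.sq_sqrt ht.le
    have hq' : q = -(v 0 * v 0) + v 1 * v 1 + v 2 * v 2 + v 3 * v 3 - v 4 * v 4 := rfl
    have hct : eta32 (c t) (c t) = -1 := by
      have hy' : -(y 0 * y 0) + y 1 * y 1 + y 2 * y 2 + y 3 * y 3 - y 4 * y 4 = -1 := hy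
      have hv' : -(y 0 * v 0) + y 1 * v 1 + y 2 * v 2 + y 3 * v 3 - y 4 * v 4 = 0 := hv
      simp only [hc, eta32, Pi.add_apply, Pi.smul_apply, smul_eq_mul]
      linear_combination (Real.sqrt (1 + t^2 * q))^2 * hy'
        + (2 * Real.sqrt (1 + t^2 * q) * t) * hv' - ha - t^2 * hq'
    exact hYt (c t) hct
  have h1 : deriv (fun t => g (c t)) 0 = 0 := by
    rw [hev.deriv_eq]; simp
  have h2 : fderiv ℝ g y v = 0 := by rw [← hcomp.deriv, h1]
  have h3 := fderiv_eta (fun p => p) Yf contDiff_id hY y v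
  rw [show (fun p => eta32 ((fun p => p) p) (Yf p)) = g from rfl] at h3
  have h4 : fderiv ℝ (fun p : Fin 5 → ℝ => p) y v = v := by
    rw [show (fun p : Fin 5 → ℝ => p) = id from rfl, fderiv_id]; rfl
  rw [h2, h4] at h3
  linarith [h3]


/-- Q = dyⁱ ∧ dy⁴ is a conformal Killing–Yano 2-form on the anti-de Sitter
quadric adS = {y : η₃₂(y,y) = −1} with associated 1-form ξ = yⁱdy⁴ − y⁴dyⁱ. -/
theorem cky_adS (i : Fin 5) (hi : i = 1 ∨ i = 2 ∨ i = 3)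
    (X Y Z : (Fin 5 → ℝ) → Fin 5 → ℝ)
    (hX : ContDiff ℝ (⊤ : ℕ∞) X) (hY : ContDiff ℝ (⊤ : ℕ∞) Y) (hZ : ContDiff ℝ (⊤ : ℕ∞) Z)
    (hXt : ∀ y, eta32 y y = -1 → eta32 y (X y) = 0)
    (hYt : ∀ y, eta32 y y = -1 → eta32 y (Y y) = 0)
    (hZt : ∀ y, eta32 y y = -1 → eta32 y (Z y) = 0)
    (y : Fin 5 → ℝ) (hy : eta32 y y = -1) :
    covQ i X Y Z y + covQ i Y X Z y
      = 2 * eta32 (X y) (Y y) * xiForm i y (Z y)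
        - eta32 (X y) (Z y) * xiForm i y (Y y)
        - eta32 (Y y) (Z y) * xiForm i y (X y) := by
  have hA := key Y hY hYt y (X y) hy (hXt y hy)
  have hB := key Z hZ hZt y (X y) hy (hXt y hy)
  have hC := key X hX hXt y (Y y) hy (hYt y hy)
  have hD := key Z hZ hZt y (Y y) hy (hYt y hy)
  simp only [covQ, covD, proj]
  rw [fderiv_qf i Y Z hY hZ y (X y), fderiv_qf i X Z hX hZ y (Y y), hA, hB, hC, hD]
  simp only [qf, xiForm, eta32, Pi.add_apply, Pi.smul_apply, smul_eq_mul]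
  ring
end
end
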